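/- If u : ℝ × ℝ → ℝ is infinitely differentiable, u(·,t) is supported in a fixed compact set for all t, and u satisfies the constant-coefficient two-band homogenized equation ∂ₜ⁴u − A₁ ∂ₜ⁴∂ₓ²u + A₂ ∂ₜ⁴∂ₓ⁴u − A₃ ∂ₜ²∂ₓ⁴u + A₄ ∂ₜ²∂ₓ²u + A₅ ∂ₜ²u − A₆ ∂ₓ²u + A₇ ∂ₓ⁴u = 0 everywhere, then the multiband energy E_MB(t) = 2 ∫_ℝ ( (1/2)|∂ₜ²u|² − (A₅/2)|∂ₜu|² − ∂ₜu · ∂ₜ³u + (A₁/2)|∂ₜ²∂ₓu|² + (A₄/2)|∂ₜ∂ₓu|² − A₁ ∂ₜ∂ₓu · ∂ₜ³∂ₓu + (A₂/2)|∂ₜ²∂ₓ²u|² + (A₃/2)|∂ₜ∂ₓ²u|² − A₂ ∂ₜ∂ₓ²u · ∂ₜ³∂ₓ²u − (A₆/2)|∂ₓu|² − (A₇/2)|∂ₓ²u|² ) dx is constant in t. -/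

import Mathlib

open MeasureTheory Filter Function

/-- Partial derivative in the first (space) variable. -/
noncomputable def pdx (u : ℝ → ℝ → ℝ) : ℝ → ℝ → ℝ := fun x t => deriv (fun y => u y t) x

/-- Partial derivative in the second (time) variable. -/
noncomputable def pdt (u : ℝ → ℝ → ℝ) : ℝ → ℝ → ℝ := fun x t => deriv (fun s => u x s) t

namespace Stmt10Aux

variable {v : ℝ → ℝ → ℝ}

lemma hasDerivAt_slice_t (hv : ContDiff ℝ (⊤ : ℕ∞) (uncurry v)) (x t : ℝ) :
    HasDerivAt (fun s => v x s) (fderiv ℝ (uncurry v) (x, t) (0, 1)) t := by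
  have h1 : HasFDerivAt (uncurry v) (fderiv ℝ (uncurry v) (x, t)) (x, t) :=
    (hv.differentiable (by simp) (x, t)).hasFDerivAt
  have h2 : HasDerivAt (fun s : ℝ => ((x : ℝ), s)) (((0 : ℝ), (1 : ℝ))) t :=
    (hasDerivAt_const t x).prodMk (hasDerivAt_id t)
  exact h1.comp_hasDerivAt t h2

lemma hasDerivAt_slice_x (hv : ContDiff ℝ (⊤ : ℕ∞) (uncurry v)) (x t : ℝ) :
    HasDerivAt (fun y => v y t) (fderiv ℝ (uncurry v) (x, t) (1, 0)) x := by
  have h1 : HasFDerivAt (uncurry v) (fderiv ℝ (uncurry v) (x, t)) (x, t) :=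
    (hv.differentiable (by simp) (x, t)).hasFDerivAt
  have h2 : HasDerivAt (fun y : ℝ => (y, (t : ℝ))) (((1 : ℝ), (0 : ℝ))) x :=
    (hasDerivAt_id x).prodMk (hasDerivAt_const x t)
  exact h1.comp_hasDerivAt x h2

lemma pdt_eq (hv : ContDiff ℝ (⊤ : ℕ∞) (uncurry v)) (x t : ℝ) :
    pdt v x t = fderiv ℝ (uncurry v) (x, t) (0, 1) := (hasDerivAt_slice_t hv x t).deriv

lemma pdx_eq (hv : ContDiff ℝ (⊤ : ℕ∞) (uncurry v)) (x t : ℝ) :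
    pdx v x t = fderiv ℝ (uncurry v) (x, t) (1, 0) := (hasDerivAt_slice_x hv x t).deriv

lemma contDiff_pdt (hv : ContDiff ℝ (⊤ : ℕ∞) (uncurry v)) : ContDiff ℝ (⊤ : ℕ∞) (uncurry (pdt v)) := by
  have : uncurry (pdt v) = fun p => fderiv ℝ (uncurry v) p (0, 1) := by
    funext p; cases p with | mk x t => exact pdt_eq hv x t
  rw [this]
  exact (hv.fderiv_right (by simp)).clm_apply contDiff_const

lemma contDiff_pdx (hv : ContDiff ℝ (⊤ : ℕ∞) (uncurry v)) : ContDiff ℝ (⊤ : ℕ∞) (uncurry (pdx v)) := by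
  have : uncurry (pdx v) = fun p => fderiv ℝ (uncurry v) p (1, 0) := by
    funext p; cases p with | mk x t => exact pdx_eq hv x t
  rw [this]
  exact (hv.fderiv_right (by simp)).clm_apply contDiff_const

lemma pdx_pdt_comm (hv : ContDiff ℝ (⊤ : ℕ∞) (uncurry v)) : pdx (pdt v) = pdt (pdx v) := by
  funext x t
  have hf' : ContDiff ℝ (⊤ : ℕ∞) (fderiv ℝ (uncurry v)) := hv.fderiv_right (by simp)
  have h1 : ∀ y, HasFDerivAt (uncurry v) (fderiv ℝ (uncurry v) y) y :=
    fun y => (hv.differentiable (by simp) y).hasFDerivAt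
  have h2 : HasFDerivAt (fderiv ℝ (uncurry v)) (fderiv ℝ (fderiv ℝ (uncurry v)) (x, t)) (x, t) :=
    (hf'.differentiable (by simp) (x, t)).hasFDerivAt
  have hsymm := second_derivative_symmetric h1 h2 (1, 0) (0, 1)
  have e1 : ∀ (w : ℝ × ℝ) (z : ℝ × ℝ),
      fderiv ℝ (fun q => fderiv ℝ (uncurry v) q w) (x, t) z
        = fderiv ℝ (fderiv ℝ (uncurry v)) (x, t) z w := by
    intro w z
    rw [fderiv_clm_apply (hf'.differentiable (by simp) (x, t)) (differentiableAt_const w)]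
    simp
  rw [pdx_eq (contDiff_pdt hv) x t, pdt_eq (contDiff_pdx hv) x t]
  have et : uncurry (pdt v) = fun p => fderiv ℝ (uncurry v) p (0, 1) := by
    funext p; cases p with | mk a b => exact pdt_eq hv a b
  have ex : uncurry (pdx v) = fun p => fderiv ℝ (uncurry v) p (1, 0) := by
    funext p; cases p with | mk a b => exact pdx_eq hv a b
  rw [et, ex, e1, e1]
  exact hsymm

lemma contDiff_pdx_iter (hv : ContDiff ℝ (⊤ : ℕ∞) (uncurry v)) (j : ℕ) :
    ContDiff ℝ (⊤ : ℕ∞) (uncurry (pdx^[j] v)) := by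
  induction j generalizing v with
  | zero => exact hv
  | succ n ih => rw [Function.iterate_succ_apply]; exact ih (contDiff_pdx hv)

lemma contDiff_pdt_iter (hv : ContDiff ℝ (⊤ : ℕ∞) (uncurry v)) (i : ℕ) :
    ContDiff ℝ (⊤ : ℕ∞) (uncurry (pdt^[i] v)) := by
  induction i generalizing v with
  | zero => exact hv
  | succ n ih => rw [Function.iterate_succ_apply]; exact ih (contDiff_pdt hv)

lemma pdx_pdt_iter_comm (hv : ContDiff ℝ (⊤ : ℕ∞) (uncurry v)) (i : ℕ) :
    pdx (pdt^[i] v) = pdt^[i] (pdx v) := by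
  induction i generalizing v with
  | zero => rfl
  | succ n ih =>
    rw [Function.iterate_succ_apply, ih (contDiff_pdt hv), pdx_pdt_comm hv,
      ← Function.iterate_succ_apply]

lemma continuous_slice_x (hv : ContDiff ℝ (⊤ : ℕ∞) (uncurry v)) (t : ℝ) :
    Continuous fun x => v x t := by
  have h : (fun x => v x t) = uncurry v ∘ fun x => (x, t) := rfl
  rw [h]
  exact hv.continuous.comp (continuous_id.prodMk continuous_const)

lemma contDiff_slice_x (hv : ContDiff ℝ (⊤ : ℕ∞) (uncurry v)) (t : ℝ) :
    ContDiff ℝ 1 fun x => v x t := by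
  have h : (fun x => v x t) = uncurry v ∘ fun x => (x, t) := rfl
  rw [h]
  exact (hv.of_le (by simp)).comp (contDiff_id.prodMk contDiff_const)

lemma hasDerivAt_pdt (hv : ContDiff ℝ (⊤ : ℕ∞) (uncurry v)) (x t : ℝ) :
    HasDerivAt (fun s => v x s) (pdt v x t) t := by
  have h : DifferentiableAt ℝ (fun s => v x s) t := by
    have : (fun s => v x s) = uncurry v ∘ fun s => (x, s) := rfl
    rw [this]
    exact (hv.differentiable (by simp)).comp
      ((differentiable_const x).prodMk differentiable_id) t
  exact h.hasDerivAt

lemma hasDerivAt_pdx (hv : ContDiff ℝ (⊤ : ℕ∞) (uncurry v)) (x t : ℝ) :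
    HasDerivAt (fun y => v y t) (pdx v x t) x := by
  have h : DifferentiableAt ℝ (fun y => v y t) x := by
    have : (fun y => v y t) = uncurry v ∘ fun y => (y, t) := rfl
    rw [this]
    exact (hv.differentiable (by simp)).comp
      (differentiable_id.prodMk (differentiable_const t)) x
  exact h.hasDerivAt

section support
variable {K : Set ℝ} (hK : IsCompact K)

lemma supp_pdt (h : ∀ t x, x ∉ K → v x t = 0) : ∀ t x, x ∉ K → pdt v x t = 0 := by
  intro t x hx
  have : (fun s => v x s) = fun _ => 0 := funext fun s => h s x hx
  simp [pdt, this]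

include hK in
lemma supp_pdx (h : ∀ t x, x ∉ K → v x t = 0) : ∀ t x, x ∉ K → pdx v x t = 0 := by
  intro t x hx
  have hev : (fun y => v y t) =ᶠ[nhds x] fun _ => 0 := by
    filter_upwards [hK.isClosed.isOpen_compl.mem_nhds hx] with y hy
    exact h t y hy
  show deriv (fun y => v y t) x = 0
  rw [hev.deriv_eq]
  simp

include hK in
lemma supp_pdx_iter (h : ∀ t x, x ∉ K → v x t = 0) (j : ℕ) :
    ∀ t x, x ∉ K → pdx^[j] v x t = 0 := by
  induction j generalizing v with
  | zero => exact h
  | succ n ih => rw [Function.iterate_succ_apply]; exact ih (supp_pdx hK h)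

lemma supp_pdt_iter (h : ∀ t x, x ∉ K → v x t = 0) (i : ℕ) :
    ∀ t x, x ∉ K → pdt^[i] v x t = 0 := by
  induction i generalizing v with
  | zero => exact h
  | succ n ih => rw [Function.iterate_succ_apply]; exact ih (supp_pdt h)

end support

/-- integral over ℝ of the derivative of a C¹ compactly supported function vanishes -/
lemma integral_deriv_zero {g : ℝ → ℝ} (hg : ContDiff ℝ 1 g) (hs : HasCompactSupport g) :
    ∫ x : ℝ, deriv g x = 0 := by
  have hint : Integrable (deriv g) :=
    (hg.continuous_deriv le_rfl).integrable_of_hasCompactSupport hs.deriv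
  have := intervalIntegral.integral_Iic_add_Ioi (b := (0:ℝ))
    hint.integrableOn hint.integrableOn
  rw [← this, hs.integral_Iic_deriv_eq hg 0, hs.integral_Ioi_deriv_eq hg 0]
  ring

/-- iterated mixed partial derivative, time-iterations outside -/
noncomputable def DD (u : ℝ → ℝ → ℝ) (i j : ℕ) : ℝ → ℝ → ℝ := pdt^[i] (pdx^[j] u)

variable {u : ℝ → ℝ → ℝ}

lemma contDiff_DD (hu : ContDiff ℝ (⊤ : ℕ∞) (uncurry u)) (i j : ℕ) :
    ContDiff ℝ (⊤ : ℕ∞) (uncurry (DD u i j)) := contDiff_pdt_iter (contDiff_pdx_iter hu j) i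

lemma pdt_DD (i j : ℕ) : pdt (DD u i j) = DD u (i + 1) j :=
  (Function.iterate_succ_apply' pdt i _).symm

lemma pdx_DD (hu : ContDiff ℝ (⊤ : ℕ∞) (uncurry u)) (i j : ℕ) :
    pdx (DD u i j) = DD u i (j + 1) := by
  rw [DD, pdx_pdt_iter_comm (contDiff_pdx_iter hu j) i, ← Function.iterate_succ_apply' pdx j]
  rfl

lemma hasDerivAt_DD_t (hu : ContDiff ℝ (⊤ : ℕ∞) (uncurry u)) (i j : ℕ) (x t : ℝ) :
    HasDerivAt (fun s => DD u i j x s) (DD u (i + 1) j x t) t := by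
  have h := hasDerivAt_pdt (contDiff_DD hu i j) x t
  rwa [pdt_DD] at h

lemma hasDerivAt_DD_x (hu : ContDiff ℝ (⊤ : ℕ∞) (uncurry u)) (i j : ℕ) (x t : ℝ) :
    HasDerivAt (fun y => DD u i j y t) (DD u i (j + 1) x t) x := by
  have h := hasDerivAt_pdx (contDiff_DD hu i j) x t
  rwa [pdx_DD hu] at h

lemma supp_DD {K : Set ℝ} (hK : IsCompact K) (hs : ∀ t x, x ∉ K → u x t = 0) (i j : ℕ) :
    ∀ t x, x ∉ K → DD u i j x t = 0 :=
  supp_pdt_iter (supp_pdx_iter hK hs j) i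

end Stmt10Aux

namespace Stmt10Aux

/-- the energy density, canonical spelling -/
noncomputable def Fc (A1 A2 A3 A4 A5 A6 A7 : ℝ) (u : ℝ → ℝ → ℝ) : ℝ → ℝ → ℝ := fun x t =>
  (1/2) * (DD u 2 0 x t) ^ 2 - (A5 / 2) * (DD u 1 0 x t) ^ 2
    - DD u 1 0 x t * DD u 3 0 x t
    + (A1 / 2) * (DD u 2 1 x t) ^ 2 + (A4 / 2) * (DD u 1 1 x t) ^ 2
    - A1 * DD u 1 1 x t * DD u 3 1 x t
    + (A2 / 2) * (DD u 2 2 x t) ^ 2 + (A3 / 2) * (DD u 1 2 x t) ^ 2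
    - A2 * DD u 1 2 x t * DD u 3 2 x t
    - (A6 / 2) * (DD u 0 1 x t) ^ 2 - (A7 / 2) * (DD u 0 2 x t) ^ 2

/-- the energy flux -/
noncomputable def Gc (A1 A2 A3 A4 A5 A6 A7 : ℝ) (u : ℝ → ℝ → ℝ) : ℝ → ℝ → ℝ := fun x t =>
  (-A1) * (DD u 1 0 x t * DD u 4 1 x t)
    + A4 * (DD u 1 0 x t * DD u 2 1 x t)
    + (-A6) * (DD u 1 0 x t * DD u 0 1 x t)
    + A2 * (DD u 1 0 x t * DD u 4 3 x t - DD u 1 1 x t * DD u 4 2 x t)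
    + (-A3) * (DD u 1 0 x t * DD u 2 3 x t - DD u 1 1 x t * DD u 2 2 x t)
    + A7 * (DD u 1 0 x t * DD u 0 3 x t - DD u 1 1 x t * DD u 0 2 x t)

variable {A1 A2 A3 A4 A5 A6 A7 : ℝ} {u : ℝ → ℝ → ℝ}

lemma contDiff_Fc (hu : ContDiff ℝ (⊤ : ℕ∞) (uncurry u)) :
    ContDiff ℝ (⊤ : ℕ∞) (uncurry (Fc A1 A2 A3 A4 A5 A6 A7 u)) := by
  have c : ∀ i j, ContDiff ℝ (⊤ : ℕ∞) (fun p : ℝ × ℝ => DD u i j p.1 p.2) :=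
    fun i j => contDiff_DD hu i j
  show ContDiff ℝ (⊤ : ℕ∞) (fun p : ℝ × ℝ => Fc A1 A2 A3 A4 A5 A6 A7 u p.1 p.2)
  simp only [Fc]
  exact (((((((((((contDiff_const.mul ((c 2 0).pow 2)).sub
    (contDiff_const.mul ((c 1 0).pow 2))).sub
    ((c 1 0).mul (c 3 0))).add
    (contDiff_const.mul ((c 2 1).pow 2))).add
    (contDiff_const.mul ((c 1 1).pow 2))).sub
    ((contDiff_const.mul (c 1 1)).mul (c 3 1))).add
    (contDiff_const.mul ((c 2 2).pow 2))).add
    (contDiff_const.mul ((c 1 2).pow 2))).sub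
    ((contDiff_const.mul (c 1 2)).mul (c 3 2))).sub
    (contDiff_const.mul ((c 0 1).pow 2))).sub
    (contDiff_const.mul ((c 0 2).pow 2)))

lemma contDiff_Gc (hu : ContDiff ℝ (⊤ : ℕ∞) (uncurry u)) :
    ContDiff ℝ (⊤ : ℕ∞) (uncurry (Gc A1 A2 A3 A4 A5 A6 A7 u)) := by
  have c : ∀ i j, ContDiff ℝ (⊤ : ℕ∞) (fun p : ℝ × ℝ => DD u i j p.1 p.2) :=
    fun i j => contDiff_DD hu i j
  show ContDiff ℝ (⊤ : ℕ∞) (fun p : ℝ × ℝ => Gc A1 A2 A3 A4 A5 A6 A7 u p.1 p.2)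
  simp only [Gc]
  exact ((((((contDiff_const.mul ((c 1 0).mul (c 4 1))).add
    (contDiff_const.mul ((c 1 0).mul (c 2 1)))).add
    (contDiff_const.mul ((c 1 0).mul (c 0 1)))).add
    (contDiff_const.mul (((c 1 0).mul (c 4 3)).sub ((c 1 1).mul (c 4 2))))).add
    (contDiff_const.mul (((c 1 0).mul (c 2 3)).sub ((c 1 1).mul (c 2 2))))).add
    (contDiff_const.mul (((c 1 0).mul (c 0 3)).sub ((c 1 1).mul (c 0 2)))))

lemma supp_Fc {K : Set ℝ} (hK : IsCompact K) (hs : ∀ t x, x ∉ K → u x t = 0) :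
    ∀ t x, x ∉ K → Fc A1 A2 A3 A4 A5 A6 A7 u x t = 0 := by
  intro t x hx
  have z : ∀ i j, DD u i j x t = 0 := fun i j => supp_DD hK hs i j t x hx
  simp only [Fc, z]
  ring

lemma supp_Gc {K : Set ℝ} (hK : IsCompact K) (hs : ∀ t x, x ∉ K → u x t = 0) :
    ∀ t x, x ∉ K → Gc A1 A2 A3 A4 A5 A6 A7 u x t = 0 := by
  intro t x hx
  have z : ∀ i j, DD u i j x t = 0 := fun i j => supp_DD hK hs i j t x hx
  simp only [Gc, z]
  ring

/-- the key pointwise identity: time derivative of the density is the space derivative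
of the flux, given the PDE. -/
lemma key (hu : ContDiff ℝ (⊤ : ℕ∞) (uncurry u))
    (hpde : ∀ x t : ℝ,
      DD u 4 0 x t - A1 * DD u 4 2 x t + A2 * DD u 4 4 x t
        - A3 * DD u 2 4 x t + A4 * DD u 2 2 x t
        + A5 * DD u 2 0 x t - A6 * DD u 0 2 x t + A7 * DD u 0 4 x t = 0)
    (x t : ℝ) :
    pdt (Fc A1 A2 A3 A4 A5 A6 A7 u) x t
      = deriv (fun y => Gc A1 A2 A3 A4 A5 A6 A7 u y t) x := by
  -- time-derivative instances
  have t20 : HasDerivAt (fun s => DD u 2 0 x s) (DD u 3 0 x t) t := hasDerivAt_DD_t hu 2 0 x t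
  have t10 : HasDerivAt (fun s => DD u 1 0 x s) (DD u 2 0 x t) t := hasDerivAt_DD_t hu 1 0 x t
  have t30 : HasDerivAt (fun s => DD u 3 0 x s) (DD u 4 0 x t) t := hasDerivAt_DD_t hu 3 0 x t
  have t21 : HasDerivAt (fun s => DD u 2 1 x s) (DD u 3 1 x t) t := hasDerivAt_DD_t hu 2 1 x t
  have t11 : HasDerivAt (fun s => DD u 1 1 x s) (DD u 2 1 x t) t := hasDerivAt_DD_t hu 1 1 x t
  have t31 : HasDerivAt (fun s => DD u 3 1 x s) (DD u 4 1 x t) t := hasDerivAt_DD_t hu 3 1 x t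
  have t22 : HasDerivAt (fun s => DD u 2 2 x s) (DD u 3 2 x t) t := hasDerivAt_DD_t hu 2 2 x t
  have t12 : HasDerivAt (fun s => DD u 1 2 x s) (DD u 2 2 x t) t := hasDerivAt_DD_t hu 1 2 x t
  have t32 : HasDerivAt (fun s => DD u 3 2 x s) (DD u 4 2 x t) t := hasDerivAt_DD_t hu 3 2 x t
  have t01 : HasDerivAt (fun s => DD u 0 1 x s) (DD u 1 1 x t) t := hasDerivAt_DD_t hu 0 1 x t
  have t02 : HasDerivAt (fun s => DD u 0 2 x s) (DD u 1 2 x t) t := hasDerivAt_DD_t hu 0 2 x t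
  -- space-derivative instances
  have x10 : HasDerivAt (fun y => DD u 1 0 y t) (DD u 1 1 x t) x := hasDerivAt_DD_x hu 1 0 x t
  have x41 : HasDerivAt (fun y => DD u 4 1 y t) (DD u 4 2 x t) x := hasDerivAt_DD_x hu 4 1 x t
  have x21 : HasDerivAt (fun y => DD u 2 1 y t) (DD u 2 2 x t) x := hasDerivAt_DD_x hu 2 1 x t
  have x01 : HasDerivAt (fun y => DD u 0 1 y t) (DD u 0 2 x t) x := hasDerivAt_DD_x hu 0 1 x t
  have x43 : HasDerivAt (fun y => DD u 4 3 y t) (DD u 4 4 x t) x := hasDerivAt_DD_x hu 4 3 x t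
  have x11 : HasDerivAt (fun y => DD u 1 1 y t) (DD u 1 2 x t) x := hasDerivAt_DD_x hu 1 1 x t
  have x42 : HasDerivAt (fun y => DD u 4 2 y t) (DD u 4 3 x t) x := hasDerivAt_DD_x hu 4 2 x t
  have x23 : HasDerivAt (fun y => DD u 2 3 y t) (DD u 2 4 x t) x := hasDerivAt_DD_x hu 2 3 x t
  have x22 : HasDerivAt (fun y => DD u 2 2 y t) (DD u 2 3 x t) x := hasDerivAt_DD_x hu 2 2 x t
  have x03 : HasDerivAt (fun y => DD u 0 3 y t) (DD u 0 4 x t) x := hasDerivAt_DD_x hu 0 3 x t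
  have x02 : HasDerivAt (fun y => DD u 0 2 y t) (DD u 0 3 x t) x := hasDerivAt_DD_x hu 0 2 x t
  -- derivative of the density in time, by product rules
  have comboF :=
    (((((((((((HasDerivAt.const_mul (1/2 : ℝ) (t20.pow 2)).sub
      (HasDerivAt.const_mul (A5/2 : ℝ) (t10.pow 2))).sub
      (t10.mul t30)).add
      (HasDerivAt.const_mul (A1/2 : ℝ) (t21.pow 2))).add
      (HasDerivAt.const_mul (A4/2 : ℝ) (t11.pow 2))).sub
      ((HasDerivAt.const_mul A1 t11).mul t31)).add
      (HasDerivAt.const_mul (A2/2 : ℝ) (t22.pow 2))).add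
      (HasDerivAt.const_mul (A3/2 : ℝ) (t12.pow 2))).sub
      ((HasDerivAt.const_mul A2 t12).mul t32)).sub
      (HasDerivAt.const_mul (A6/2 : ℝ) (t01.pow 2))).sub
      (HasDerivAt.const_mul (A7/2 : ℝ) (t02.pow 2)))
  have comboG :=
    ((((((HasDerivAt.const_mul (-A1) (x10.mul x41)).add
      (HasDerivAt.const_mul A4 (x10.mul x21))).add
      (HasDerivAt.const_mul (-A6) (x10.mul x01))).add
      (HasDerivAt.const_mul A2 ((x10.mul x43).sub (x11.mul x42)))).add
      (HasDerivAt.const_mul (-A3) ((x10.mul x23).sub (x11.mul x22)))).add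
      (HasDerivAt.const_mul A7 ((x10.mul x03).sub (x11.mul x02))))
  have cF : HasDerivAt (fun s => Fc A1 A2 A3 A4 A5 A6 A7 u x s)
      (pdt (Fc A1 A2 A3 A4 A5 A6 A7 u) x t) t :=
    hasDerivAt_pdt (contDiff_Fc hu) x t
  have cG : HasDerivAt (fun y => Gc A1 A2 A3 A4 A5 A6 A7 u y t)
      (pdx (Gc A1 A2 A3 A4 A5 A6 A7 u) x t) x :=
    hasDerivAt_pdx (contDiff_Gc hu) x t
  have eF := cF.unique comboF
  have eG := cG.unique comboG
  show pdt (Fc A1 A2 A3 A4 A5 A6 A7 u) x t = pdx (Gc A1 A2 A3 A4 A5 A6 A7 u) x t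
  rw [eF, eG]
  linear_combination (-(DD u 1 0 x t)) * hpde x t

end Stmt10Aux

set_option maxHeartbeats 1000000 in
open Stmt10Aux in
/-- The multiband energy `E_MB(t)` is conserved for smooth, spatially compactly supported
solutions of the constant-coefficient two-band homogenized equation. -/
theorem stmt_10 (A1 A2 A3 A4 A5 A6 A7 : ℝ) (u : ℝ → ℝ → ℝ)
    (hu : ContDiff ℝ (⊤ : ℕ∞) (Function.uncurry u))
    (K : Set ℝ) (hK : IsCompact K)
    (hsupp : ∀ t x : ℝ, x ∉ K → u x t = 0)
    (hpde : ∀ x t : ℝ,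
      pdt^[4] u x t - A1 * pdt^[4] (pdx^[2] u) x t + A2 * pdt^[4] (pdx^[4] u) x t
        - A3 * pdt^[2] (pdx^[4] u) x t + A4 * pdt^[2] (pdx^[2] u) x t
        + A5 * pdt^[2] u x t - A6 * pdx^[2] u x t + A7 * pdx^[4] u x t = 0)
    (E : ℝ → ℝ)
    (hE : E = fun t => 2 * ∫ x : ℝ,
      ((1/2) * (pdt^[2] u x t) ^ 2 - (A5 / 2) * (pdt u x t) ^ 2
        - pdt u x t * pdt^[3] u x t
        + (A1 / 2) * (pdt^[2] (pdx u) x t) ^ 2 + (A4 / 2) * (pdt (pdx u) x t) ^ 2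
        - A1 * pdt (pdx u) x t * pdt^[3] (pdx u) x t
        + (A2 / 2) * (pdt^[2] (pdx^[2] u) x t) ^ 2 + (A3 / 2) * (pdt (pdx^[2] u) x t) ^ 2
        - A2 * pdt (pdx^[2] u) x t * pdt^[3] (pdx^[2] u) x t
        - (A6 / 2) * (pdx u x t) ^ 2 - (A7 / 2) * (pdx^[2] u x t) ^ 2)) :
    ∀ t₁ t₂ : ℝ, E t₁ = E t₂ := by
  have hE' : E = fun t => 2 * ∫ x : ℝ, Fc A1 A2 A3 A4 A5 A6 A7 u x t := hE
  have hpde' : ∀ x t : ℝ,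
      DD u 4 0 x t - A1 * DD u 4 2 x t + A2 * DD u 4 4 x t
        - A3 * DD u 2 4 x t + A4 * DD u 2 2 x t
        + A5 * DD u 2 0 x t - A6 * DD u 0 2 x t + A7 * DD u 0 4 x t = 0 := hpde
  set F := Fc A1 A2 A3 A4 A5 A6 A7 u with hF
  set G := Gc A1 A2 A3 A4 A5 A6 A7 u with hG
  have hFc : ContDiff ℝ (⊤ : ℕ∞) (Function.uncurry F) := contDiff_Fc hu
  have hGc : ContDiff ℝ (⊤ : ℕ∞) (Function.uncurry G) := contDiff_Gc hu
  have hFsupp : ∀ t x, x ∉ K → F x t = 0 := supp_Fc hK hsupp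
  have hGsupp : ∀ t x, x ∉ K → G x t = 0 := supp_Gc hK hsupp
  have hF't : ContDiff ℝ (⊤ : ℕ∞) (Function.uncurry (pdt F)) := contDiff_pdt hFc
  -- the integral of pdt F vanishes
  have hIntF' : ∀ t : ℝ, ∫ x : ℝ, pdt F x t = 0 := by
    intro t
    have hkey : (fun x => pdt F x t) = fun x => deriv (fun y => G y t) x :=
      funext fun x => key hu hpde' x t
    rw [hkey]
    exact integral_deriv_zero (contDiff_slice_x hGc t)
      (HasCompactSupport.intro hK fun x hx => hGsupp t x hx)
  -- the map t ↦ ∫ F x t has derivative 0 everywhere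
  have hI : ∀ t₀ : ℝ, HasDerivAt (fun t => ∫ x : ℝ, F x t) 0 t₀ := by
    intro t₀
    have cont_slice : ∀ t : ℝ, Continuous fun x => F x t := fun t =>
      continuous_slice_x hFc t
    have contF' : Continuous (Function.uncurry (pdt F)) := hF't.continuous
    obtain ⟨C, hC⟩ := (hK.prod (isCompact_closedBall t₀ 1)).exists_bound_of_continuousOn
      contF'.continuousOn
    have hbound : ∀ x : ℝ, ∀ t ∈ Metric.ball t₀ 1,
        ‖pdt F x t‖ ≤ K.indicator (fun _ => C) x := by
      intro x t ht
      by_cases hx : x ∈ K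
      · have hmem : (x, t) ∈ K ×ˢ Metric.closedBall t₀ 1 :=
          ⟨hx, Metric.ball_subset_closedBall ht⟩
        have := hC (x, t) hmem
        simpa [Set.indicator_of_mem hx] using this
      · have h0 : pdt F x t = 0 := supp_pdt hFsupp t x hx
        simp [h0, Set.indicator_of_notMem hx]
    have hmeas : ∀ᶠ t in nhds t₀, AEStronglyMeasurable (fun x => F x t) volume :=
      Eventually.of_forall fun t => (cont_slice t).aestronglyMeasurable
    have hint : Integrable (fun x => F x t₀) volume :=
      (cont_slice t₀).integrable_of_hasCompactSupport
        (HasCompactSupport.intro hK fun x hx => hFsupp t₀ x hx)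
    have hmeas' : AEStronglyMeasurable (fun x => pdt F x t₀) volume :=
      (continuous_slice_x hF't t₀).aestronglyMeasurable
    have hbint : Integrable (K.indicator fun _ => C) volume :=
      (integrableOn_const hK.measure_lt_top.ne).integrable_indicator
        hK.measurableSet
    have hdiff : ∀ᵐ x : ℝ ∂volume, ∀ t ∈ Metric.ball t₀ 1,
        HasDerivAt (fun t => F x t) (pdt F x t) t :=
      Eventually.of_forall fun x t _ => hasDerivAt_pdt hFc x t
    have h := hasDerivAt_integral_of_dominated_loc_of_deriv_le
      (F := fun t x => F x t) (F' := fun t x => pdt F x t) (Metric.ball_mem_nhds t₀ one_pos)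
      hmeas hint hmeas' (Eventually.of_forall hbound) hbint hdiff
    have h2 := h.2
    rwa [hIntF' t₀] at h2
  intro t₁ t₂
  have hconst : (∫ x : ℝ, F x t₁) = ∫ x : ℝ, F x t₂ :=
    is_const_of_deriv_eq_zero (fun t => (hI t).differentiableAt)
      (fun t => (hI t).deriv) t₁ t₂
  rw [hE']
  exact congrArg (fun r => 2 * r) hconst
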